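/- arXiv:1204.0644 — 5 statements merged into one kernel-verified Lean document; each statement's English description precedes it below -/
import Mathlib

section
/- Let G be a graph of order n ≥ 2 and let H be any graph with root vertex v and at least two vertices. Then the domination number of the rooted product satisfies γ(G∘H) ∈ {n·γ(H), n·(γ(H)−1) + γ(G)}. -/
open Finset
open scoped Classical

/-- `S` is a dominating set of `G`: every vertex outside `S` has a neighbor in `S`. -/
def IsDomSet {α : Type*} (G : SimpleGraph α) (S : Set α) : Prop :=
  ∀ v ∉ S, ∃ u ∈ S, G.Adj u v

/-- The domination number `γ(G)`. -/
noncomputable def domNum {α : Type*} (G : SimpleGraph α) [Fintype α] : ℕ :=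
  sInf {k | ∃ S : Finset α, IsDomSet G ↑S ∧ S.card = k}

/-- The rooted product `G ∘ H` with root `v` of `H`: one copy of `H` for each vertex of `G`,
identifying the root of the `a`-th copy with the vertex `a` of `G`. -/
def rootedProd {α β : Type*} (G : SimpleGraph α) (H : SimpleGraph β) (v : β) :
    SimpleGraph (α × β) where
  Adj x y := (x.2 = v ∧ y.2 = v ∧ G.Adj x.1 y.1) ∨ (x.1 = y.1 ∧ H.Adj x.2 y.2)
  symm := by
    constructor
    rintro x y (⟨h1, h2, h3⟩ | ⟨h1, h2⟩)
    · exact Or.inl ⟨h2, h1, h3.symm⟩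
    · exact Or.inr ⟨h1.symm, h2.symm⟩
  loopless := by
    constructor
    rintro x (⟨_, _, h⟩ | ⟨_, h⟩)
    · exact G.loopless.irrefl _ h
    · exact H.loopless.irrefl _ h

/-- The graph `G - v` obtained by deleting the vertex `v`. -/
def deleteVert {α : Type*} (G : SimpleGraph α) (v : α) : SimpleGraph {u : α // u ≠ v} :=
  SimpleGraph.comap Subtype.val G

/-- The graph `G - A` obtained by deleting a set `A` of vertices. -/
def deleteSet {α : Type*} (G : SimpleGraph α) (A : Set α) : SimpleGraph {u : α // u ∉ A} :=
  SimpleGraph.comap Subtype.val G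

/-- `f` is a Roman dominating function on `G`. -/
def IsRDF {α : Type*} (G : SimpleGraph α) (f : α → ℕ) : Prop :=
  (∀ u, f u ≤ 2) ∧ ∀ u, f u = 0 → ∃ w, G.Adj u w ∧ f w = 2

/-- The Roman domination number `γ_R(G)`. -/
noncomputable def romanDomNum {α : Type*} (G : SimpleGraph α) [Fintype α] : ℕ :=
  sInf {k | ∃ f : α → ℕ, IsRDF G f ∧ ∑ u, f u = k}

/-- `S` is an independent set of `G`. -/
def IsIndep {α : Type*} (G : SimpleGraph α) (S : Set α) : Prop :=
  ∀ u ∈ S, ∀ w ∈ S, ¬ G.Adj u w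

/-- The independence number `α(G)`. -/
noncomputable def indepNum {α : Type*} (G : SimpleGraph α) [Fintype α] : ℕ :=
  sSup {k | ∃ S : Finset α, IsIndep G ↑S ∧ S.card = k}

/-- The independent domination number `i(G)`. -/
noncomputable def indepDomNum {α : Type*} (G : SimpleGraph α) [Fintype α] : ℕ :=
  sInf {k | ∃ S : Finset α, IsDomSet G ↑S ∧ IsIndep G ↑S ∧ S.card = k}

/-- `S` is a connected dominating set of `G`. -/
def IsConnDomSet {α : Type*} (G : SimpleGraph α) (S : Set α) : Prop :=
  IsDomSet G S ∧ (G.induce S).Connected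

/-- The connected domination number `γ_c(G)`. -/
noncomputable def connDomNum {α : Type*} (G : SimpleGraph α) [Fintype α] : ℕ :=
  sInf {k | ∃ S : Finset α, IsConnDomSet G ↑S ∧ S.card = k}

/-- `D` is a super dominating set of `G`: every `w ∉ D` has a neighbor `u ∈ D` with
`N(u) ⊆ D ∪ {w}`. -/
def IsSuperDomSet {α : Type*} (G : SimpleGraph α) (D : Set α) : Prop :=
  ∀ w ∉ D, ∃ u ∈ D, G.Adj u w ∧ ∀ x, G.Adj u x → x ∈ D ∪ {w}

/-- The super domination number `γ_sp(G)`. -/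
noncomputable def superDomNum {α : Type*} (G : SimpleGraph α) [Fintype α] : ℕ :=
  sInf {k | ∃ S : Finset α, IsSuperDomSet G ↑S ∧ S.card = k}

/-- The number of end vertices (vertices of degree one) of `G`, denoted `n₁(G)`. -/
noncomputable def endVertCount {α : Type*} (G : SimpleGraph α) [Fintype α] : ℕ :=
  Nat.card {u : α // G.degree u = 1}

/-!
Let `D` be a minimum dominating set of `G ∘ H` and `D_a` its part in the copy `H_a`. Each `D_a`
dominates `H_a` except possibly its root, so `|D_a| ≥ γ(H) - 1`, with `|D_a| ≥ γ(H)` when the root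
is dominated from inside `H_a`; the copies of the latter kind dominate `G`, which gives
`|D| ≥ n (γ(H) - 1) + γ(G)`. Taking `γ(H)` vertices in every copy gives `γ(G ∘ H) ≤ n γ(H)`. If
this is strict, some `D_a` has at most `γ(H) - 1` vertices and dominates `H` except its root; a
copy of `D_a` in every `H_b` plus a minimum dominating set of `G` on the roots then dominates
`G ∘ H` with at most `n (γ(H) - 1) + γ(G)` vertices.
-/

section Domination

variable {α : Type*} [Fintype α] (G : SimpleGraph α)

lemma exists_isDomSet_card_eq_domNum : ∃ S : Finset α, IsDomSet G ↑S ∧ S.card = domNum G :=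
  Nat.sInf_mem (s := {k | ∃ S : Finset α, IsDomSet G ↑S ∧ S.card = k})
    ⟨Fintype.card α, univ, fun _ hv => absurd (mem_univ _) hv, card_univ⟩

variable {G} in
lemma IsDomSet.domNum_le_card {S : Finset α} (h : IsDomSet G ↑S) : domNum G ≤ S.card :=
  Nat.sInf_le ⟨S, h, rfl⟩

end Domination

def IsDomSetExcept {β : Type*} (H : SimpleGraph β) (v : β) (S : Set β) : Prop :=
  ∀ u ≠ v, u ∉ S → ∃ w ∈ S, H.Adj w u

namespace IsDomSetExcept

variable {β : Type*} {H : SimpleGraph β} {v : β} {S : Set β}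

lemma isDomSet_insert (h : IsDomSetExcept H v S) : IsDomSet H (insert v S) := by
  intro u hu
  rw [Set.mem_insert_iff, not_or] at hu
  obtain ⟨w, hw, hadj⟩ := h u hu.1 hu.2
  exact ⟨w, Set.mem_insert_of_mem v hw, hadj⟩

lemma isDomSet (h : IsDomSetExcept H v S) (hv : v ∈ S ∨ ∃ w ∈ S, H.Adj w v) :
    IsDomSet H S := by
  intro u hu
  by_cases huv : u = v
  · subst huv
    exact hv.resolve_left hu
  · exact h u huv hu

lemma domNum_le_card_add_one [Fintype β] {S : Finset β} (h : IsDomSetExcept H v ↑S) :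
    domNum H ≤ S.card + 1 :=
  calc domNum H ≤ (insert v S).card := by
        apply IsDomSet.domNum_le_card
        simpa only [coe_insert] using h.isDomSet_insert
    _ ≤ S.card + 1 := card_insert_le v S

end IsDomSetExcept

noncomputable def copyPart {α β : Type*} [Fintype β] (D : Finset (α × β)) (a : α) : Finset β :=
  {u | (a, u) ∈ D}

@[simp]
lemma mem_copyPart {α β : Type*} [Fintype β] {D : Finset (α × β)} {a : α} {u : β} :
    u ∈ copyPart D a ↔ (a, u) ∈ D := by
  simp [copyPart]

lemma card_eq_sum_card_copyPart {α β : Type*} [Fintype α] [Fintype β] (D : Finset (α × β)) :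
    D.card = ∑ a, (copyPart D a).card := by
  simp only [copyPart, card_filter]
  rw [← Fintype.sum_prod_type', ← card_filter, filter_mem_eq_inter, univ_inter]

section RootedProduct

variable {α β : Type*} {G : SimpleGraph α} {H : SimpleGraph β} {v : β}

lemma isDomSet_rootedProd_univ_product [Fintype α] {S : Finset β} (hS : IsDomSet H ↑S) :
    IsDomSet (rootedProd G H v) ↑(univ ×ˢ S : Finset (α × β)) := by
  rintro ⟨a, u⟩ hau
  obtain ⟨w, hw, hadj⟩ := hS u (by simpa using hau)
  exact ⟨(a, w), by simpa using hw, Or.inr ⟨rfl, hadj⟩⟩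

lemma isDomSet_rootedProd_of_isDomSetExcept [Fintype α] {S : Finset β}
    (hS : IsDomSetExcept H v ↑S) {T : Finset α} (hT : IsDomSet G ↑T) :
    IsDomSet (rootedProd G H v) ↑(univ ×ˢ S ∪ T ×ˢ {v} : Finset (α × β)) := by
  rintro ⟨a, u⟩ hau
  simp only [coe_union, coe_product, coe_univ, coe_singleton, Set.mem_union, Set.mem_prod,
    Set.mem_univ, true_and, Set.mem_singleton_iff, not_or, not_and] at hau
  by_cases huv : u = v
  · subst huv
    obtain ⟨b, hb, hadj⟩ := hT a fun ha => hau.2 ha rfl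
    exact ⟨(b, u), by simp_all, Or.inl ⟨rfl, rfl, hadj⟩⟩
  · obtain ⟨w, hw, hadj⟩ := hS u huv hau.1
    exact ⟨(a, w), by simp_all, Or.inr ⟨rfl, hadj⟩⟩

variable (G H v) in
lemma domNum_rootedProd_le_mul [Fintype α] [Fintype β] :
    domNum (rootedProd G H v) ≤ Fintype.card α * domNum H := by
  obtain ⟨S, hS, hcard⟩ := exists_isDomSet_card_eq_domNum H
  simpa [hcard] using (isDomSet_rootedProd_univ_product (G := G) (v := v) hS).domNum_le_card

variable (G) in
lemma domNum_rootedProd_le_of_isDomSetExcept [Fintype α] [Fintype β] {S : Finset β}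
    (hS : IsDomSetExcept H v ↑S) :
    domNum (rootedProd G H v) ≤ Fintype.card α * S.card + domNum G := by
  obtain ⟨T, hT, hcard⟩ := exists_isDomSet_card_eq_domNum G
  calc domNum (rootedProd G H v) ≤ (univ ×ˢ S ∪ T ×ˢ {v}).card :=
        (isDomSet_rootedProd_of_isDomSetExcept hS hT).domNum_le_card
    _ ≤ (univ ×ˢ S).card + (T ×ˢ {v}).card := card_union_le _ _
    _ = Fintype.card α * S.card + domNum G := by simp [hcard]

variable {D : Finset (α × β)}

lemma IsDomSet.isDomSetExcept_copyPart [Fintype β] (hD : IsDomSet (rootedProd G H v) ↑D)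
    (a : α) :
    IsDomSetExcept H v ↑(copyPart D a) := by
  intro u huv hu
  obtain ⟨⟨b, w⟩, hbw, hadj | ⟨rfl, hadj⟩⟩ := hD (a, u) (by simpa using hu)
  · exact absurd hadj.2.1 huv
  · exact ⟨w, by simpa using hbw, hadj⟩

noncomputable def rootDominated [Fintype α] [Fintype β] (H : SimpleGraph β) (v : β)
    (D : Finset (α × β)) : Finset α :=
  {a | v ∈ copyPart D a ∨ ∃ w ∈ copyPart D a, H.Adj w v}

lemma IsDomSet.isDomSet_rootDominated [Fintype α] [Fintype β]
    (hD : IsDomSet (rootedProd G H v) ↑D) :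
    IsDomSet G ↑(rootDominated H v D) := by
  intro a ha
  simp only [rootDominated, coe_filter, mem_univ, true_and, Set.mem_ofPred_eq, not_or,
    not_exists, not_and] at ha
  obtain ⟨⟨b, w⟩, hbw, ⟨hw, -, hadj⟩ | ⟨rfl, hadj⟩⟩ := hD (a, v) (by simpa using ha.1)
  · refine ⟨b, ?_, hadj⟩
    obtain rfl : w = v := hw
    simp [rootDominated, mem_coe.mp hbw]
  · exact absurd hadj (ha.2 w (by simpa using hbw))

lemma IsDomSet.domNum_sub_one_add_le_card_copyPart [Fintype α] [Fintype β]
    (hD : IsDomSet (rootedProd G H v) ↑D) (a : α) :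
    domNum H - 1 + (if a ∈ rootDominated H v D then 1 else 0) ≤ (copyPart D a).card := by
  have hexcept := hD.isDomSetExcept_copyPart a
  split_ifs with ha
  · replace ha : v ∈ copyPart D a ∨ ∃ w ∈ copyPart D a, H.Adj w v := by
      simpa [rootDominated] using ha
    -- needed when `domNum H = 0`, where `domNum H - 1` truncates
    have hpos : 0 < (copyPart D a).card := by
      rcases ha with hv | ⟨w, hw, -⟩
      exacts [card_pos.mpr ⟨v, hv⟩, card_pos.mpr ⟨w, hw⟩]
    have := (hexcept.isDomSet (by exact_mod_cast ha)).domNum_le_card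
    omega
  · have := hexcept.domNum_le_card_add_one
    omega

lemma IsDomSet.le_card_of_rootedProd [Fintype α] [Fintype β]
    (hD : IsDomSet (rootedProd G H v) ↑D) :
    Fintype.card α * (domNum H - 1) + domNum G ≤ D.card :=
  calc Fintype.card α * (domNum H - 1) + domNum G
      ≤ Fintype.card α * (domNum H - 1) + (rootDominated H v D).card := by
        gcongr
        exact hD.isDomSet_rootDominated.domNum_le_card
    _ = ∑ a, (domNum H - 1 + if a ∈ rootDominated H v D then 1 else 0) := by
        rw [sum_add_distrib, sum_boole, sum_const, card_univ, smul_eq_mul, Nat.cast_id,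
          filter_mem_eq_inter, univ_inter]
    _ ≤ ∑ a, (copyPart D a).card :=
        sum_le_sum fun a _ => hD.domNum_sub_one_add_le_card_copyPart a
    _ = D.card := (card_eq_sum_card_copyPart D).symm

lemma IsDomSet.exists_isDomSetExcept_of_card_lt [Fintype α] [Fintype β]
    (hD : IsDomSet (rootedProd G H v) ↑D) (hlt : D.card < Fintype.card α * domNum H) :
    ∃ S : Finset β, IsDomSetExcept H v ↑S ∧ S.card ≤ domNum H - 1 := by
  obtain ⟨a, -, ha⟩ : ∃ a ∈ univ, (copyPart D a).card < domNum H := by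
    apply exists_lt_of_sum_lt
    simpa [← card_eq_sum_card_copyPart] using hlt
  exact ⟨copyPart D a, hD.isDomSetExcept_copyPart a, by omega⟩

end RootedProduct

theorem stmt1_general {α β : Type*} [Fintype α] [Fintype β]
    (G : SimpleGraph α) (H : SimpleGraph β) (v : β) :
    domNum (rootedProd G H v) ∈
      ({Fintype.card α * domNum H,
        Fintype.card α * (domNum H - 1) + domNum G} : Set ℕ) := by
  obtain ⟨D, hD, hcard⟩ := exists_isDomSet_card_eq_domNum (rootedProd G H v)
  rcases (domNum_rootedProd_le_mul G H v).eq_or_lt with h | hlt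
  · exact Or.inl h
  · obtain ⟨S, hS, hScard⟩ := hD.exists_isDomSetExcept_of_card_lt (hcard ▸ hlt)
    refine Or.inr (le_antisymm ?_ (hcard ▸ hD.le_card_of_rootedProd))
    calc domNum (rootedProd G H v) ≤ Fintype.card α * S.card + domNum G :=
          domNum_rootedProd_le_of_isDomSetExcept G hS
      _ ≤ Fintype.card α * (domNum H - 1) + domNum G := by gcongr

/-- `γ(G∘H) ∈ {n·γ(H), n·(γ(H)−1) + γ(G)}`. -/
theorem stmt1 {α β : Type*} [Fintype α] [Fintype β]
    (G : SimpleGraph α) (H : SimpleGraph β) (v : β)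
    (hn : 2 ≤ Fintype.card α) (hm : 2 ≤ Fintype.card β) :
    domNum (rootedProd G H v) ∈
      ({Fintype.card α * domNum H,
        Fintype.card α * (domNum H - 1) + domNum G} : Set ℕ) :=
  stmt1_general G H v
end

section
/- Let G = (V, E) be a graph and let f = (B₀, B₁, B₂) be a minimum-weight Roman dominating function on G, where Bᵢ = {u ∈ V : f(u) = i}. Then for every vertex v ∈ V: (i) if v ∈ B₀, then γ_R(G) − 1 ≤ γ_R(G − v) ≤ γ_R(G); (ii) if v ∈ B₁, then γ_R(G − v) = γ_R(G) − 1; (iii) if v ∈ B₂, then γ_R(G) − 1 ≤ γ_R(G − v) ≤ γ_R(G) + δ(v) − 2, where δ(v) is the degree of v in G. -/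
open Finset
open scoped Classical

/-! Three modifications of Roman dominating functions give the bounds. A `γ_R(G - v)`-function
extended by `1` at `v` dominates `G`, so `γ_R(G) ≤ γ_R(G - v) + 1`. If `f v ≠ 2`, no vertex relies
on `v`, so `f` restricts to `G - v` with weight `γ_R(G) - f v`. If `f v = 2`, raising every
neighbour of `v` to at least `1` repairs the restriction, at a cost of at most `δ(v)`. -/

section RomanDomination

variable {α : Type*} (G : SimpleGraph α)

lemma IsRDF.deleteVert_of_ne_two {f : α → ℕ} (hf : IsRDF G f) {v : α} (hv : f v ≠ 2) :
    IsRDF (deleteVert G v) (fun u => f u) := by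
  refine ⟨fun u => hf.1 u, fun u hu => ?_⟩
  obtain ⟨w, huw, hw⟩ := hf.2 u hu
  exact ⟨⟨w, by rintro rfl; exact hv hw⟩, huw, hw⟩

lemma IsRDF.deleteVert_max_adj {f : α → ℕ} (hf : IsRDF G f) (v : α) :
    IsRDF (deleteVert G v) (fun u => max (f u) (if G.Adj v u then 1 else 0)) := by
  refine ⟨fun u => max_le (hf.1 u) (by split_ifs <;> omega), fun u hu => ?_⟩
  have hvu : ¬ G.Adj v u := fun h => by simp [h] at hu
  obtain ⟨w, huw, hw⟩ := hf.2 u (by simpa [hvu] using hu)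
  refine ⟨⟨w, by rintro rfl; exact hvu huw.symm⟩, huw, ?_⟩
  show max (f w) _ = 2
  exact hw ▸ max_eq_left (by split_ifs <;> omega)

variable [Fintype α]

lemma romanDomNum_le_sum {f : α → ℕ} (hf : IsRDF G f) : romanDomNum G ≤ ∑ u, f u :=
  Nat.sInf_le ⟨f, hf, rfl⟩

lemma exists_isRDF_sum_eq_romanDomNum : ∃ f : α → ℕ, IsRDF G f ∧ ∑ u, f u = romanDomNum G :=
  Nat.sInf_mem (s := {k | ∃ f : α → ℕ, IsRDF G f ∧ ∑ u, f u = k})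
    ⟨_, fun _ => 2, ⟨fun _ => le_rfl, fun _ h => absurd h two_ne_zero⟩, rfl⟩

lemma sum_adj_eq_degree (v : α) : ∑ u, (if G.Adj v u then 1 else 0) = G.degree v := by
  rw [Finset.sum_boole, ← SimpleGraph.neighborFinset_eq_filter, Nat.cast_id,
    SimpleGraph.card_neighborFinset_eq_degree]

lemma romanDomNum_le_romanDomNum_deleteVert_add_one (v : α) :
    romanDomNum G ≤ romanDomNum (deleteVert G v) + 1 := by
  obtain ⟨g, hg, hg_sum⟩ := exists_isRDF_sum_eq_romanDomNum (deleteVert G v)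
  let f : α → ℕ := fun u => if h : u = v then 1 else g ⟨u, h⟩
  have hf : IsRDF G f := by
    refine ⟨fun u => ?_, fun u hu => ?_⟩
    · by_cases h : u = v
      · simp [f, h]
      · simpa [f, h] using hg.1 ⟨u, h⟩
    · have h : u ≠ v := by rintro rfl; simp [f] at hu
      obtain ⟨w, huw, hw⟩ := hg.2 ⟨u, h⟩ (by simpa [f, h] using hu)
      exact ⟨w, huw, by simpa [f, w.prop] using hw⟩
  have hf_rest : ∑ u : {u // u ≠ v}, f u = ∑ u, g u :=
    Finset.sum_congr rfl fun u _ => dif_neg u.prop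
  have hf_sum := Fintype.sum_eq_add_sum_subtype_ne f v
  have hfv : f v = 1 := dif_pos rfl
  have := romanDomNum_le_sum G hf
  omega

lemma romanDomNum_deleteVert_add_le_sum_of_ne_two {f : α → ℕ} (hf : IsRDF G f) {v : α}
    (hv : f v ≠ 2) : romanDomNum (deleteVert G v) + f v ≤ ∑ u, f u := by
  rw [Fintype.sum_eq_add_sum_subtype_ne f v, add_comm]
  exact Nat.add_le_add_left (romanDomNum_le_sum _ (hf.deleteVert_of_ne_two G hv)) _

lemma romanDomNum_deleteVert_add_le_sum_add_degree {f : α → ℕ} (hf : IsRDF G f) (v : α) :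
    romanDomNum (deleteVert G v) + f v ≤ ∑ u, f u + G.degree v := by
  let a : α → ℕ := fun u => if G.Adj v u then 1 else 0
  have hle : romanDomNum (deleteVert G v) ≤ ∑ u : {u // u ≠ v}, max (f u) (a u) :=
    romanDomNum_le_sum _ (hf.deleteVert_max_adj G v)
  have hmax : ∑ u : {u // u ≠ v}, max (f u) (a u) ≤ ∑ u : {u // u ≠ v}, (f u + a u) :=
    Finset.sum_le_sum fun u _ => max_le_add_of_nonneg (Nat.zero_le _) (Nat.zero_le _)
  have hf_sum := Fintype.sum_eq_add_sum_subtype_ne f v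
  have ha_sum : G.degree v = a v + ∑ u : {u // u ≠ v}, a u :=
    (sum_adj_eq_degree G v).symm.trans (Fintype.sum_eq_add_sum_subtype_ne a v)
  have hav : a v = 0 := if_neg (G.loopless.irrefl v)
  rw [Finset.sum_add_distrib] at hmax
  omega

end RomanDomination

/-- behaviour of the Roman domination number under vertex deletion, according to
the value of a minimum Roman dominating function at the deleted vertex. -/
theorem stmt2 {α : Type*} [Fintype α] (G : SimpleGraph α)
    (f : α → ℕ) (hf : IsRDF G f) (hmin : ∑ u, f u = romanDomNum G) (v : α) :
    (f v = 0 → romanDomNum G - 1 ≤ romanDomNum (deleteVert G v) ∧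
      romanDomNum (deleteVert G v) ≤ romanDomNum G) ∧
    (f v = 1 → romanDomNum (deleteVert G v) = romanDomNum G - 1) ∧
    (f v = 2 → romanDomNum G - 1 ≤ romanDomNum (deleteVert G v) ∧
      romanDomNum (deleteVert G v) ≤ romanDomNum G + G.degree v - 2) := by
  have h_extend := romanDomNum_le_romanDomNum_deleteVert_add_one G v
  have h_restrict : f v ≠ 2 → romanDomNum (deleteVert G v) + f v ≤ romanDomNum G :=
    fun hv => hmin ▸ romanDomNum_deleteVert_add_le_sum_of_ne_two G hf hv
  have h_raise := hmin ▸ romanDomNum_deleteVert_add_le_sum_add_degree G hf v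
  refine ⟨fun hv => ?_, fun hv => ?_, fun hv => ?_⟩
  · have := h_restrict (by omega)
    omega
  · have := h_restrict (by omega)
    omega
  · omega
end

section
/- Let G be a graph of order n ≥ 2 and let H be a graph with root vertex v and at least two vertices. If there exists a maximum independent set of H not containing the root v, then α(G∘H) = n·α(H). -/
open Finset
open scoped Classical

/-
Within one copy of `H`, the rooted product has exactly the edges of `H`, so an independent set
of `G ∘ H` meets each of the `n` copies in an independent set of `H`: this gives
`α(G ∘ H) ≤ n · α(H)`. Conversely, the only edges between different copies join two roots, so
placing in every copy a maximum independent set of `H` that avoids the root yields an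
independent set of size `n · α(H)`.
-/

section IndepNum

variable {α : Type*} [Fintype α] (G : SimpleGraph α)

lemma indepNum_bddAbove : BddAbove {k | ∃ S : Finset α, IsIndep G ↑S ∧ S.card = k} :=
  ⟨Fintype.card α, by rintro k ⟨S, -, rfl⟩; exact S.card_le_univ⟩

lemma card_le_indepNum {S : Finset α} (hS : IsIndep G ↑S) : S.card ≤ indepNum G :=
  le_csSup (indepNum_bddAbove G) ⟨S, hS, rfl⟩

lemma indepNum_le_of_forall {k : ℕ} (h : ∀ S : Finset α, IsIndep G ↑S → S.card ≤ k) :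
    indepNum G ≤ k :=
  csSup_le ⟨0, ∅, by simp [IsIndep], rfl⟩ (by rintro _ ⟨S, hS, rfl⟩; exact h S hS)

end IndepNum

section RootedProd

variable {α β : Type*} (G : SimpleGraph α) (H : SimpleGraph β) (v : β)

lemma IsIndep.isIndep_fiber_rootedProd {T : Finset (α × β)} (hT : IsIndep (rootedProd G H v) ↑T)
    (a : α) : IsIndep H ↑((T.filter (·.1 = a)).image Prod.snd) := by
  intro b hb c hc hbc
  simp only [coe_image, coe_filter, Set.mem_image, Set.mem_ofPred_eq] at hb hc
  obtain ⟨x, ⟨hxT, rfl⟩, rfl⟩ := hb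
  obtain ⟨y, ⟨hyT, hya⟩, rfl⟩ := hc
  exact hT x hxT y hyT (Or.inr ⟨hya.symm, hbc⟩)

lemma card_fiber_le_indepNum [Fintype β] {T : Finset (α × β)}
    (hT : IsIndep (rootedProd G H v) ↑T) (a : α) :
    (T.filter (·.1 = a)).card ≤ indepNum H := by
  have hinj : Set.InjOn Prod.snd (↑(T.filter (·.1 = a)) : Set (α × β)) := by
    intro x hx y hy hxy
    simp only [coe_filter, Set.mem_ofPred_eq] at hx hy
    exact Prod.ext (hx.2.trans hy.2.symm) hxy
  rw [← card_image_of_injOn hinj]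
  exact card_le_indepNum H (hT.isIndep_fiber_rootedProd G H v a)

lemma indepNum_rootedProd_le [Fintype α] [Fintype β] :
    indepNum (rootedProd G H v) ≤ Fintype.card α * indepNum H := by
  refine indepNum_le_of_forall _ fun T hT => ?_
  calc T.card = ∑ a : α, (T.filter (·.1 = a)).card :=
        card_eq_sum_card_fiberwise fun _ _ => mem_univ _
    _ ≤ ∑ _a : α, indepNum H :=
        sum_le_sum fun a _ => card_fiber_le_indepNum G H v hT a
    _ = Fintype.card α * indepNum H := by simp

lemma isIndep_univ_product_rootedProd [Fintype α] {S : Finset β} (hS : IsIndep H ↑S)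
    (hvS : v ∉ S) : IsIndep (rootedProd G H v) ↑((univ : Finset α) ×ˢ S) := by
  rintro x hx y hy (⟨hxv, -, -⟩ | ⟨-, hxy⟩)
  all_goals simp only [coe_product, Set.mem_prod, mem_coe] at hx hy
  · exact hvS (hxv ▸ hx.2)
  · exact hS _ hx.2 _ hy.2 hxy

end RootedProd

theorem stmt9_general {α β : Type*} [Fintype α] [Fintype β]
    (G : SimpleGraph α) (H : SimpleGraph β) (v : β)
    (hv : ∃ S : Finset β, IsIndep H ↑S ∧ S.card = indepNum H ∧ v ∉ S) :
    indepNum (rootedProd G H v) = Fintype.card α * indepNum H := by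
  obtain ⟨S, hS, hcard, hvS⟩ := hv
  refine (indepNum_rootedProd_le G H v).antisymm ?_
  calc Fintype.card α * indepNum H = ((univ : Finset α) ×ˢ S).card := by
        rw [card_product, card_univ, hcard]
    _ ≤ indepNum (rootedProd G H v) :=
        card_le_indepNum _ (isIndep_univ_product_rootedProd G H v hS hvS)

/-- if some maximum independent set of `H` avoids the root `v`, then
`α(G∘H) = n·α(H)`. -/
theorem stmt9 {α β : Type*} [Fintype α] [Fintype β]
    (G : SimpleGraph α) (H : SimpleGraph β) (v : β)
    (hn : 2 ≤ Fintype.card α) (hm : 2 ≤ Fintype.card β)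
    (hv : ∃ S : Finset β, IsIndep H ↑S ∧ S.card = indepNum H ∧ v ∉ S) :
    indepNum (rootedProd G H v) = Fintype.card α * indepNum H :=
  stmt9_general G H v hv
end

section
/- Let G be a graph and let v be a vertex of G. If v does not belong to any minimum independent dominating set of G, then i(G − v) = i(G). -/
open Finset
open scoped Classical

/-! A minimum independent dominating set of `G` avoids `v`, so it is one of `G − v`:
`i(G − v) ≤ i(G)`. Conversely a minimum independent dominating set `D` of `G − v` dominates all
of `G` except possibly `v`. Either `v` has a neighbour in `D`, and then `i(G) ≤ |D|`, or `D ∪ {v}`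
is an independent dominating set of `G` of size `i(G − v) + 1` containing `v`; it is not minimum,
so `i(G) ≤ i(G − v)` again. -/

section

variable {α β : Type*} {G : SimpleGraph α}

lemma IsIndep.insert {S : Set α} {v : α} (hS : IsIndep G S) (hv : ∀ u ∈ S, ¬ G.Adj u v) :
    IsIndep G (insert v S) := by
  rintro a (rfl | ha) b (rfl | hb)
  · exact G.loopless.irrefl _
  · exact fun hab => hv b hb hab.symm
  · exact hv a ha
  · exact hS a ha b hb

lemma IsIndep.comap {S : Set α} (hS : IsIndep G S) (f : β → α) :
    IsIndep (G.comap f) (f ⁻¹' S) :=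
  fun u hu w hw => hS (f u) hu (f w) hw

lemma IsIndep.image {D : Set β} {f : β → α} (hD : IsIndep (G.comap f) D) :
    IsIndep G (f '' D) := by
  rintro _ ⟨u, hu, rfl⟩ _ ⟨w, hw, rfl⟩
  exact hD u hu w hw

lemma isDomSet_of_maximal_isIndep {S : Set α} (hS : Maximal (IsIndep G) S) : IsDomSet G S := by
  intro w hw
  by_contra! hnone
  exact hw (hS.mem_of_prop_insert (hS.prop.insert hnone))

lemma IsDomSet.comap_val {p : α → Prop} {S : Set α} (hS : IsDomSet G S) (hSp : ∀ u ∈ S, p u) :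
    IsDomSet (G.comap (Subtype.val : Subtype p → α)) (Subtype.val ⁻¹' S) := by
  intro w hw
  obtain ⟨u, hu, hadj⟩ := hS w hw
  exact ⟨⟨u, hSp u hu⟩, hu, hadj⟩

lemma IsDomSet.exists_adj_image_val {v : α} {D : Set {u // u ≠ v}} (hD : IsDomSet (deleteVert G v) D)
    {w : α} (hwv : w ≠ v) (hw : w ∉ Subtype.val '' D) : ∃ u ∈ Subtype.val '' D, G.Adj u w := by
  obtain ⟨u, hu, hadj⟩ := hD ⟨w, hwv⟩ fun hwD => hw ⟨_, hwD, rfl⟩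
  exact ⟨u, ⟨u, hu, rfl⟩, hadj⟩

lemma IsDomSet.image_val_of_adj {v : α} {D : Set {u // u ≠ v}}
    (hD : IsDomSet (deleteVert G v) D) (hv : ∃ u ∈ Subtype.val '' D, G.Adj u v) :
    IsDomSet G (Subtype.val '' D) := by
  intro w hw
  obtain rfl | hwv := eq_or_ne w v
  · exact hv
  · exact hD.exists_adj_image_val hwv hw

lemma IsDomSet.insert_image_val {v : α} {D : Set {u // u ≠ v}}
    (hD : IsDomSet (deleteVert G v) D) : IsDomSet G (insert v (Subtype.val '' D)) := by
  intro w hw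
  rw [Set.mem_insert_iff, not_or] at hw
  obtain ⟨u, hu, hadj⟩ := hD.exists_adj_image_val hw.1 hw.2
  exact ⟨u, Set.mem_insert_of_mem v hu, hadj⟩

section indepDomNum

variable [Fintype α]

lemma exists_isDomSet_isIndep (G : SimpleGraph α) :
    ∃ S : Finset α, IsDomSet G ↑S ∧ IsIndep G ↑S := by
  have hempty : IsIndep G ∅ := fun _ h => h.elim
  obtain ⟨S, hS⟩ := Set.toFinite {S : Set α | IsIndep G S} |>.exists_maximal ⟨∅, hempty⟩
  refine ⟨S.toFinset, ?_, ?_⟩ <;> rw [Set.coe_toFinset]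
  · exact isDomSet_of_maximal_isIndep hS
  · exact hS.prop

lemma indepDomNum_le_card {S : Finset α} (hdom : IsDomSet G ↑S) (hind : IsIndep G ↑S) :
    indepDomNum G ≤ S.card :=
  Nat.sInf_le ⟨S, hdom, hind, rfl⟩

lemma exists_card_eq_indepDomNum (G : SimpleGraph α) :
    ∃ S : Finset α, IsDomSet G ↑S ∧ IsIndep G ↑S ∧ S.card = indepDomNum G := by
  obtain ⟨S, hdom, hind⟩ := exists_isDomSet_isIndep G
  exact Nat.sInf_mem (s := {k | ∃ S : Finset α, IsDomSet G ↑S ∧ IsIndep G ↑S ∧ S.card = k})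
    ⟨S.card, S, hdom, hind, rfl⟩

lemma indepDomNum_deleteVert_le {v : α} {S : Finset α} (hdom : IsDomSet G ↑S)
    (hind : IsIndep G ↑S) (hvS : v ∉ S) : indepDomNum (deleteVert G v) ≤ S.card := by
  have hSv : ∀ u ∈ (S : Set α), u ≠ v := fun u hu huv => hvS (huv ▸ hu)
  calc indepDomNum (deleteVert G v) ≤ (S.subtype (· ≠ v)).card := by
        have hcoe : (↑(S.subtype (· ≠ v)) : Set {u // u ≠ v}) = Subtype.val ⁻¹' ↑S := by
          ext; simp
        apply indepDomNum_le_card <;> rw [hcoe]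
        · exact hdom.comap_val hSv
        · exact hind.comap _
    _ = S.card := by
        rw [card_subtype, filter_true_of_mem hSv]

lemma indepDomNum_le_deleteVert_or_exists_mem (v : α) :
    indepDomNum G ≤ indepDomNum (deleteVert G v) ∨
      ∃ S : Finset α, IsDomSet G ↑S ∧ IsIndep G ↑S ∧ S.card = indepDomNum (deleteVert G v) + 1 ∧
        v ∈ S := by
  obtain ⟨D, hdom, hind, hcard⟩ := exists_card_eq_indepDomNum (deleteVert G v)
  set E := D.map (Function.Embedding.subtype _)
  have hcoe : (E : Set α) = Subtype.val '' (D : Set {u // u ≠ v}) := by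
    rw [coe_map, Function.Embedding.coe_subtype]
  have hEind : IsIndep G ↑E := hcoe ▸ hind.image
  have hcardE : E.card = indepDomNum (deleteVert G v) := (card_map _).trans hcard
  by_cases hadj : ∃ u ∈ (E : Set α), G.Adj u v
  · left
    have hEdom : IsDomSet G ↑E := hcoe ▸ hdom.image_val_of_adj (hcoe ▸ hadj)
    exact hcardE ▸ indepDomNum_le_card hEdom hEind
  · right
    push Not at hadj
    have hvE : v ∉ E := fun hv => by simp [E] at hv
    refine ⟨insert v E, ?_, ?_, by rw [card_insert_of_notMem hvE, hcardE], mem_insert_self v E⟩ <;>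
      rw [coe_insert]
    · exact hcoe ▸ hdom.insert_image_val
    · exact hEind.insert hadj

end indepDomNum

end

/-- if `v` belongs to no minimum independent dominating set of `G`, then
`i(G − v) = i(G)`. -/
theorem stmt12 {α : Type*} [Fintype α] (G : SimpleGraph α) (v : α)
    (hv : ∀ S : Finset α, IsDomSet G ↑S → IsIndep G ↑S → S.card = indepDomNum G → v ∉ S) :
    indepDomNum (deleteVert G v) = indepDomNum G := by
  obtain ⟨S, hdom, hind, hcard⟩ := exists_card_eq_indepDomNum G
  refine le_antisymm (hcard ▸ indepDomNum_deleteVert_le hdom hind (hv S hdom hind hcard)) ?_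
  rcases indepDomNum_le_deleteVert_or_exists_mem (G := G) v with hle | ⟨T, hTdom, hTind, hTcard, hvT⟩
  · exact hle
  · have hne : T.card ≠ indepDomNum G := fun h => hv T hTdom hTind h hvT
    have hge := indepDomNum_le_card hTdom hTind
    omega
end

section
/- If T₁ and T₂ are trees of order at least three, then the rooted product T₁∘T₂ is also a tree of order n(T₁)·n(T₂), and its number of end vertices satisfies n₁(T₁∘T₂) = n(T₁)·(n₁(T₂) − 1) if the root of T₂ is an end vertex of T₂, and n₁(T₁∘T₂) = n(T₁)·n₁(T₂) otherwise. -/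
open Finset
open scoped Classical

/-!
The degree of `(a, b)` in `G ∘ H` is `deg_H b`, plus `deg_G a` when `b` is the root. Summing
degrees gives `|E(G ∘ H)| = n(G)·|E(H)| + |E(G)|`, so a rooted product of trees is connected with
one edge fewer than vertices, hence a tree. In trees of order at least two every degree is
positive, so the end vertices of `T₁ ∘ T₂` are exactly the `(a, b)` with `b ≠ v` an end vertex
of `T₂`.
-/

open SimpleGraph

section
variable {α β : Type*} (G : SimpleGraph α) (H : SimpleGraph β) (v : β)

@[simp]
lemma rootedProd_adj {x y : α × β} :
    (rootedProd G H v).Adj x y ↔ x.2 = v ∧ y.2 = v ∧ G.Adj x.1 y.1 ∨ x.1 = y.1 ∧ H.Adj x.2 y.2 :=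
  Iff.rfl

lemma rootedProd_neighborFinset [Fintype α] [Fintype β] (a : α) (b : β) :
    (rootedProd G H v).neighborFinset (a, b) =
      (H.neighborFinset b).map ⟨(a, ·), Prod.mk_right_injective a⟩ ∪
        if b = v then (G.neighborFinset a).map ⟨(·, v), Prod.mk_left_injective v⟩ else ∅ := by
  ext ⟨c, d⟩
  split_ifs with hb
  · subst hb
    simp only [mem_neighborFinset, rootedProd_adj, true_and, mem_union, mem_map,
      Function.Embedding.coeFn_mk, Prod.mk.injEq, exists_eq_right_right, ↓existsAndEq]
    tauto
  · simp only [mem_neighborFinset, rootedProd_adj, hb, false_and, false_or, union_empty, mem_map,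
      Function.Embedding.coeFn_mk, Prod.mk.injEq, exists_eq_right_right]
    tauto

lemma rootedProd_degree [Fintype α] [Fintype β] (a : α) (b : β) :
    (rootedProd G H v).degree (a, b) = H.degree b + if b = v then G.degree a else 0 := by
  rw [← card_neighborFinset_eq_degree, rootedProd_neighborFinset, card_union_of_disjoint]
  · split_ifs <;> simp
  · split_ifs with hb
    · subst hb
      simp only [Finset.disjoint_left, mem_map, mem_neighborFinset]
      rintro _ ⟨d, -, rfl⟩ ⟨c, hc, hcd⟩
      obtain ⟨rfl, -⟩ := Prod.mk.inj hcd
      exact G.loopless.irrefl c hc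
    · exact Finset.disjoint_empty_right _

lemma rootedProd_sum_degrees [Fintype α] [Fintype β] :
    ∑ x, (rootedProd G H v).degree x =
      Fintype.card α * ∑ b, H.degree b + ∑ a, G.degree a := by
  simp only [Fintype.sum_prod_type, rootedProd_degree, sum_add_distrib, Finset.sum_ite_eq',
    mem_univ, if_true, sum_const, card_univ, smul_eq_mul]

lemma rootedProd_card_edgeFinset [Fintype α] [Fintype β] :
    #(rootedProd G H v).edgeFinset = Fintype.card α * #H.edgeFinset + #G.edgeFinset := by
  have h := rootedProd_sum_degrees G H v
  simp only [sum_degrees_eq_twice_card_edges] at h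
  lia

lemma rootedProd_connected (hG : G.Connected) (hH : H.Connected) :
    (rootedProd G H v).Connected := by
  have : Nonempty (α × β) := ⟨(hG.nonempty.some, hH.nonempty.some)⟩
  let copy (a : α) : H →g rootedProd G H v := ⟨(a, ·), fun h => Or.inr ⟨rfl, h⟩⟩
  let base : G →g rootedProd G H v := ⟨(·, v), fun h => Or.inl ⟨rfl, rfl, h⟩⟩
  have to_root (x : α × β) : (rootedProd G H v).Reachable x (x.1, v) :=
    (hH.preconnected x.2 v).map (copy x.1)
  refine .mk fun x y => ((to_root x).trans ?_).trans (to_root y).symm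
  exact (hG.preconnected x.1 y.1).map base

lemma rootedProd_isTree [Fintype α] [Fintype β] (hG : G.IsTree) (hH : H.IsTree) :
    (rootedProd G H v).IsTree := by
  refine isTree_iff_connected_and_card.mpr
    ⟨rootedProd_connected G H v hG.connected hH.connected, ?_⟩
  rw [Nat.card_eq_fintype_card, ← edgeFinset_card, rootedProd_card_edgeFinset,
    Nat.card_eq_fintype_card, Fintype.card_prod, ← hG.card_edgeFinset, ← hH.card_edgeFinset]
  ring

lemma rootedProd_degree_eq_one_iff [Fintype α] [Fintype β] (hG : ∀ a, 0 < G.degree a)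
    (hv : 0 < H.degree v) {a : α} {b : β} :
    (rootedProd G H v).degree (a, b) = 1 ↔ b ≠ v ∧ H.degree b = 1 := by
  have := hG a
  rw [rootedProd_degree]
  split_ifs with hb
  · subst hb
    simp only [ne_eq, not_true_eq_false, false_and, iff_false]
    omega
  · simp only [add_zero, ne_eq, hb, not_false_eq_true, true_and]

lemma endVertCount_rootedProd [Fintype α] [Fintype β] (hG : ∀ a, 0 < G.degree a)
    (hv : 0 < H.degree v) :
    endVertCount (rootedProd G H v) =
      Fintype.card α * Nat.card {b // b ≠ v ∧ H.degree b = 1} := by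
  let e : {x : α × β // (rootedProd G H v).degree x = 1} ≃ α × {b // b ≠ v ∧ H.degree b = 1} :=
    { toFun x := (x.1.1, ⟨x.1.2, (rootedProd_degree_eq_one_iff G H v hG hv).1 x.2⟩)
      invFun p := ⟨(p.1, p.2.1), (rootedProd_degree_eq_one_iff G H v hG hv).2 p.2.2⟩ }
  rw [endVertCount, Nat.card_congr e, Nat.card_prod, Nat.card_eq_fintype_card]

end

lemma Nat.card_subtype_ne_and {β : Type*} [Finite β] (p : β → Prop) (v : β) :
    Nat.card {b // b ≠ v ∧ p b} = Nat.card {b // p b} - if p v then 1 else 0 := by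
  have h : {b | b ≠ v ∧ p b} = {b | p b} \ {v} := by
    ext b
    simp [and_comm]
  rw [← Set.coe_ofPred, ← Set.coe_ofPred, Nat.card_coe_set_eq, Nat.card_coe_set_eq, h]
  split_ifs with hv
  · exact Set.ncard_sdiff_singleton_of_mem hv
  · rw [Set.sdiff_singleton_eq_self (s := {b | p b}) hv, Nat.sub_zero]

/-- for trees `T₁, T₂` of order at least three, `T₁∘T₂` is a tree of order
`n(T₁)·n(T₂)`, with `n₁(T₁∘T₂) = n(T₁)·(n₁(T₂)−1)` if the root is an end vertex of `T₂`, and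
`n₁(T₁∘T₂) = n(T₁)·n₁(T₂)` otherwise. -/
theorem stmt17 {α β : Type*} [Fintype α] [Fintype β]
    (T₁ : SimpleGraph α) (T₂ : SimpleGraph β) (v : β)
    (h₁ : T₁.IsTree) (h₂ : T₂.IsTree)
    (hn : 3 ≤ Fintype.card α) (hm : 3 ≤ Fintype.card β) :
    (rootedProd T₁ T₂ v).IsTree ∧
    Fintype.card (α × β) = Fintype.card α * Fintype.card β ∧
    (T₂.degree v = 1 →
      endVertCount (rootedProd T₁ T₂ v) = Fintype.card α * (endVertCount T₂ - 1)) ∧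
    (T₂.degree v ≠ 1 →
      endVertCount (rootedProd T₁ T₂ v) = Fintype.card α * endVertCount T₂) := by
  have : Nontrivial α := Fintype.one_lt_card_iff_nontrivial.mp (by omega)
  have : Nontrivial β := Fintype.one_lt_card_iff_nontrivial.mp (by omega)
  have hcount := endVertCount_rootedProd T₁ T₂ v
    (fun a => h₁.preconnected.degree_pos_of_nontrivial a)
    (h₂.preconnected.degree_pos_of_nontrivial v)
  rw [Nat.card_subtype_ne_and] at hcount
  refine ⟨rootedProd_isTree T₁ T₂ v h₁ h₂, Fintype.card_prod α β, fun hv => ?_, fun hv => ?_⟩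
  · rwa [if_pos hv] at hcount
  · rwa [if_neg hv, Nat.sub_zero] at hcount
end
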